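/- Let φ be a continuous real-valued function on the unit circle T. For a probability measure μ on T, the supremum over continuous functions g : T → ℝ with g < 1 of the quantity ∫_T g dμ + ∫_T log(1 − g) dλ_T, where λ_T is the uniform (normalized Haar) measure on T, equals the Kullback–Leibler divergence K(λ_T | μ). -/

import Mathlib

open MeasureTheory Real Classical

/-- Kullback–Leibler information `K(P|Q) = ∫ log(dP/dQ) dP` if `P ≪ Q` and the
log-likelihood ratio is `P`-integrable, and `+∞` otherwise. -/
noncomputable def kullback {α : Type*} [MeasurableSpace α] (P Q : Measure α) : EReal :=
  if P ≪ Q ∧ Integrable (llr P Q) P then ((∫ x, llr P Q x ∂P : ℝ) : EReal) else ⊤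

/-- The uniform (normalized arc-length) probability measure on the unit circle of `ℂ`. -/
noncomputable def lambdaT : Measure ℂ :=
  Measure.map (fun θ : ℝ => Complex.exp (θ * Complex.I))
    ((ENNReal.ofReal (2 * π))⁻¹ • volume.restrict (Set.Icc 0 (2 * π)))

/-!
Young's inequality `y + t log (1 - y) ≤ t log t + 1 - t = klFun t` for `t ≥ 0` and `y < 1`, with
equality at `y = 1 - t`, integrated against `μ` with `t = dλ/dμ`, bounds the functional by
`K(λ|μ)`. Conversely, for `g = 1 - dλ/dμ` truncated to `[(n + 1)⁻¹, n + 1]` the integrand is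
nonnegative and tends to `klFun (dλ/dμ)`, so Fatou's lemma reaches `K(λ|μ)`, finite or not. If `λ`
is not absolutely continuous with respect to `μ`, taking `g = -n` on a `μ`-null set `B` charged by
`λ` gives the values `λ(B) log (1 + n) → ∞`. These measurable `g` are finally replaced by
continuous ones: on functions with values in a fixed `[a, b]`, `b < 1`, the functional is
Lipschitz for the `L¹(μ + λ)` distance, in which continuous functions are dense.
-/

open Filter Topology Set InformationTheory
open scoped ENNReal

lemma add_mul_log_one_sub_le_klFun {t y : ℝ} (ht : 0 ≤ t) (hy : y < 1) :
    y + t * log (1 - y) ≤ klFun t := by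
  rw [klFun_apply]
  rcases ht.eq_or_lt with rfl | ht
  · simpa using hy.le
  · have h := log_le_sub_one_of_pos (div_pos (sub_pos.2 hy) ht)
    rw [log_div (sub_pos.2 hy).ne' ht.ne'] at h
    have := mul_le_mul_of_nonneg_left h ht.le
    rw [mul_sub, mul_sub, mul_div_cancel₀ _ ht.ne'] at this
    linarith

lemma log_sub_log_le_inv_mul_abs {c x y : ℝ} (hc : 0 < c) (hx : c ≤ x) (hy : c ≤ y) :
    log x - log y ≤ c⁻¹ * |x - y| := by
  have hy₀ : 0 < y := hc.trans_le hy
  calc log x - log y = log (x / y) := (log_div (hc.trans_le hx).ne' hy₀.ne').symm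
    _ ≤ x / y - 1 := log_le_sub_one_of_pos (div_pos (hc.trans_le hx) hy₀)
    _ = (x - y) / y := by field_simp
    _ ≤ |x - y| / y := by gcongr; exact le_abs_self _
    _ ≤ |x - y| / c := by gcongr
    _ = c⁻¹ * |x - y| := div_eq_inv_mul _ _

lemma abs_log_sub_log_le {c x y : ℝ} (hc : 0 < c) (hx : c ≤ x) (hy : c ≤ y) :
    |log x - log y| ≤ c⁻¹ * |x - y| :=
  abs_sub_le_iff.2 ⟨log_sub_log_le_inv_mul_abs hc hx hy,
    abs_sub_comm x y ▸ log_sub_log_le_inv_mul_abs hc hy hx⟩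

noncomputable def clip (n : ℕ) (t : ℝ) : ℝ := max ((n : ℝ) + 1)⁻¹ (min ((n : ℝ) + 1) t)

lemma inv_le_clip (n : ℕ) (t : ℝ) : ((n : ℝ) + 1)⁻¹ ≤ clip n t := le_max_left _ _

lemma clip_le (n : ℕ) (t : ℝ) : clip n t ≤ n + 1 :=
  max_le ((inv_le_one_of_one_le₀ (by simp)).trans (by simp)) (min_le_left _ _)

@[fun_prop]
lemma continuous_clip (n : ℕ) : Continuous (clip n) := by unfold clip; fun_prop

lemma clip_eq_of_le {n : ℕ} {t : ℝ} (h : t ≤ ((n : ℝ) + 1)⁻¹) : clip n t = ((n : ℝ) + 1)⁻¹ := by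
  rw [clip, min_eq_right (h.trans ((clip_le n t).trans' (inv_le_clip n t))), max_eq_left h]

lemma clip_eq_self {n : ℕ} {t : ℝ} (h₁ : ((n : ℝ) + 1)⁻¹ ≤ t) (h₂ : t ≤ n + 1) : clip n t = t := by
  rw [clip, min_eq_right h₂, max_eq_right h₁]

lemma clip_eq_of_ge {n : ℕ} {t : ℝ} (h : (n : ℝ) + 1 ≤ t) : clip n t = n + 1 := by
  rw [clip, min_eq_left h, max_eq_right ((inv_le_clip n t).trans (clip_le n t))]

lemma one_sub_clip_add_mul_log_clip_nonneg (n : ℕ) (t : ℝ) :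
    0 ≤ 1 - clip n t + t * log (clip n t) := by
  have hc : 0 < clip n t := (by positivity : (0 : ℝ) < ((n : ℝ) + 1)⁻¹).trans_le (inv_le_clip n t)
  -- `clip n t` lies between `t` and `1`, so `t * log (clip n t) ≥ clip n t * log (clip n t)`
  have key : 0 ≤ (t - clip n t) * log (clip n t) := by
    rcases le_total t ((n : ℝ) + 1)⁻¹ with h | h
    · rw [clip_eq_of_le h]
      exact mul_nonneg_of_nonpos_of_nonpos (by linarith)
        (log_nonpos (by positivity) (inv_le_one_of_one_le₀ (by simp)))
    rcases le_total t ((n : ℝ) + 1) with h' | h'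
    · simp [clip_eq_self h h']
    · rw [clip_eq_of_ge h']
      exact mul_nonneg (by linarith) (log_nonneg (by simp))
  have := klFun_nonneg hc.le
  rw [klFun_apply] at this
  nlinarith

lemma tendsto_one_sub_clip_add_mul_log_clip {t : ℝ} (ht : 0 ≤ t) :
    Tendsto (fun n : ℕ => 1 - clip n t + t * log (clip n t)) atTop (𝓝 (klFun t)) := by
  have hinv : Tendsto (fun n : ℕ => ((n : ℝ) + 1)⁻¹) atTop (𝓝 0) :=
    tendsto_inv_atTop_zero.comp (tendsto_atTop_add_const_right _ 1 tendsto_natCast_atTop_atTop)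
  rcases ht.eq_or_lt with rfl | ht
  · have h₀ (n : ℕ) : clip n 0 = ((n : ℝ) + 1)⁻¹ := clip_eq_of_le (by positivity)
    simpa [h₀, klFun_zero] using (tendsto_const_nhds (x := (1 : ℝ))).sub hinv
  · refine tendsto_const_nhds.congr' ?_
    filter_upwards [hinv.eventually (gt_mem_nhds ht),
      tendsto_natCast_atTop_atTop.eventually_ge_atTop t] with n h₁ h₂
    rw [clip_eq_self h₁.le (by linarith), klFun_apply]
    ring

variable {α : Type*} [MeasurableSpace α] {μ ν : Measure α}

noncomputable def dualityFunctional (μ ν : Measure α) (g : α → ℝ) : ℝ :=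
  ∫ x, g x ∂μ + ∫ x, log (1 - g x) ∂ν

def IsAdmissible (φ : α → ℝ) : Prop := Measurable φ ∧ ∃ a b, b < 1 ∧ ∀ x, φ x ∈ Icc a b

lemma IsAdmissible.integrable [IsFiniteMeasure μ] {φ : α → ℝ} (hφ : IsAdmissible φ) :
    Integrable φ μ := by
  obtain ⟨hφm, a, b, -, hφab⟩ := hφ
  exact .of_mem_Icc a b hφm.aemeasurable (ae_of_all _ hφab)

lemma IsAdmissible.integrable_log_one_sub [IsFiniteMeasure μ] {φ : α → ℝ} (hφ : IsAdmissible φ) :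
    Integrable (fun x => log (1 - φ x)) μ := by
  obtain ⟨hφm, a, b, hb, hφab⟩ := hφ
  refine .of_mem_Icc (log (1 - b)) (log (1 - a)) (by fun_prop) (ae_of_all _ fun x => ?_)
  obtain ⟨hax, hxb⟩ := hφab x
  exact ⟨log_le_log (by linarith) (by linarith), log_le_log (by linarith) (by linarith)⟩

lemma isAdmissible_indicator {B : Set α} (hB : MeasurableSet B) {c : ℝ} (hc : c < 1) :
    IsAdmissible (B.indicator fun _ => c) := by
  refine ⟨measurable_const.indicator hB, min c 0, max c 0, max_lt hc one_pos, fun x => ?_⟩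
  by_cases hx : x ∈ B <;> simp [hx]

lemma isAdmissible_one_sub_clip {f : α → ℝ} (hf : Measurable f) (n : ℕ) :
    IsAdmissible fun x => 1 - clip n (f x) := by
  refine ⟨by fun_prop, 1 - (n + 1), 1 - ((n : ℝ) + 1)⁻¹, sub_lt_self 1 (by positivity), fun x => ?_⟩
  exact ⟨by linarith [clip_le n (f x)], by linarith [inv_le_clip n (f x)]⟩

lemma dualityFunctional_eq_integral [IsFiniteMeasure μ] [IsFiniteMeasure ν] (hac : ν ≪ μ)
    {g : α → ℝ} (hgμ : Integrable g μ) (hgν : Integrable (fun x => log (1 - g x)) ν) :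
    dualityFunctional μ ν g = ∫ x, (g x + (ν.rnDeriv μ x).toReal * log (1 - g x)) ∂μ := by
  rw [integral_add hgμ ((integrable_toReal_rnDeriv_mul_iff hac).2 hgν),
    integral_toReal_rnDeriv_mul hac, dualityFunctional]

theorem dualityFunctional_le_toReal_klDiv [IsFiniteMeasure μ] [IsFiniteMeasure ν] (hac : ν ≪ μ)
    (hint : Integrable (llr ν μ) ν) {g : α → ℝ} (hg : ∀ᵐ x ∂μ, g x < 1)
    (hgμ : Integrable g μ) (hgν : Integrable (fun x => log (1 - g x)) ν) :
    dualityFunctional μ ν g ≤ (klDiv ν μ).toReal := by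
  rw [dualityFunctional_eq_integral hac hgμ hgν, toReal_klDiv_eq_integral_klFun hac]
  refine integral_mono_ae (hgμ.add ((integrable_toReal_rnDeriv_mul_iff hac).2 hgν))
    ((integrable_klFun_rnDeriv_iff hac).2 hint) ?_
  filter_upwards [hg] with x hx
  exact add_mul_log_one_sub_le_klFun ENNReal.toReal_nonneg hx

theorem klDiv_le_liminf_dualityFunctional_clip [IsFiniteMeasure μ] [IsFiniteMeasure ν]
    (hac : ν ≪ μ) :
    klDiv ν μ ≤ liminf (fun n : ℕ => ENNReal.ofReal
      (dualityFunctional μ ν fun x => 1 - clip n (ν.rnDeriv μ x).toReal)) atTop := by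
  set f : α → ℝ := fun x => (ν.rnDeriv μ x).toReal
  have hf : Measurable f := (Measure.measurable_rnDeriv ν μ).ennreal_toReal
  have hT : ∀ n : ℕ, ENNReal.ofReal (dualityFunctional μ ν fun x => 1 - clip n (f x))
      = ∫⁻ x, ENNReal.ofReal (1 - clip n (f x) + f x * log (clip n (f x))) ∂μ := by
    intro n
    have hφ := isAdmissible_one_sub_clip hf n
    rw [dualityFunctional_eq_integral hac hφ.integrable hφ.integrable_log_one_sub,
      ofReal_integral_eq_lintegral_ofReal]
    · simp only [sub_sub_cancel, f]
    · exact hφ.integrable.add ((integrable_toReal_rnDeriv_mul_iff hac).2 hφ.integrable_log_one_sub)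
    · exact ae_of_all _ fun x => by simpa using one_sub_clip_add_mul_log_clip_nonneg n (f x)
  calc klDiv ν μ = ∫⁻ x, ENNReal.ofReal (klFun (f x)) ∂μ := klDiv_eq_lintegral_klFun_of_ac hac
    _ = ∫⁻ x, liminf (fun n : ℕ =>
          ENNReal.ofReal (1 - clip n (f x) + f x * log (clip n (f x)))) atTop ∂μ :=
      lintegral_congr fun x => ((ENNReal.tendsto_ofReal
        (tendsto_one_sub_clip_add_mul_log_clip ENNReal.toReal_nonneg)).liminf_eq).symm
    _ ≤ _ := lintegral_liminf_le fun n => by fun_prop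
    _ = _ := congrArg (liminf · atTop) (funext hT).symm

theorem tendsto_dualityFunctional_indicator [IsFiniteMeasure ν] {B : Set α}
    (hB : MeasurableSet B) (hμB : μ B = 0) (hνB : ν B ≠ 0) :
    Tendsto (fun n : ℕ => dualityFunctional μ ν (B.indicator fun _ => -(n : ℝ))) atTop atTop := by
  have hT : ∀ n : ℕ, dualityFunctional μ ν (B.indicator fun _ => -(n : ℝ))
      = ν.real B * log (1 + n) := by
    intro n
    have : (fun x => log (1 - B.indicator (fun _ => -(n : ℝ)) x))
        = B.indicator fun _ => log (1 + n) := by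
      ext x; by_cases hx : x ∈ B <;> simp [hx]
    simp [dualityFunctional, this, integral_indicator_const _ hB, measureReal_def, hμB]
  simp_rw [hT]
  exact (tendsto_log_atTop.comp (tendsto_atTop_add_const_left _ 1
    tendsto_natCast_atTop_atTop)).const_mul_atTop (ENNReal.toReal_pos hνB (measure_ne_top ν B))

theorem exists_isAdmissible_klDiv_le_liminf (μ ν : Measure α) [IsFiniteMeasure μ]
    [IsFiniteMeasure ν] :
    ∃ φ : ℕ → α → ℝ, (∀ n, IsAdmissible (φ n)) ∧
      klDiv ν μ ≤ liminf (fun n => ENNReal.ofReal (dualityFunctional μ ν (φ n))) atTop := by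
  by_cases hac : ν ≪ μ
  · exact ⟨_, isAdmissible_one_sub_clip (Measure.measurable_rnDeriv ν μ).ennreal_toReal,
      klDiv_le_liminf_dualityFunctional_clip hac⟩
  obtain ⟨B, hB, hμB, hνB⟩ : ∃ B, MeasurableSet B ∧ μ B = 0 ∧ ν B ≠ 0 := by
    by_contra! h
    exact hac (Measure.AbsolutelyContinuous.mk h)
  refine ⟨fun n => B.indicator fun _ => -(n : ℝ),
    fun n => isAdmissible_indicator hB (by linarith [n.cast_nonneg' (α := ℝ)]), ?_⟩
  exact le_top.trans_eq (ENNReal.tendsto_ofReal_atTop.comp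
    (tendsto_dualityFunctional_indicator hB hμB hνB)).liminf_eq.symm

theorem abs_dualityFunctional_sub_le [IsFiniteMeasure μ] [IsFiniteMeasure ν] {φ ψ : α → ℝ}
    {a b : ℝ} (hφ : Measurable φ) (hψ : Measurable ψ) (hφab : ∀ x, φ x ∈ Icc a b)
    (hψab : ∀ x, ψ x ∈ Icc a b) (hb : b < 1) :
    |dualityFunctional μ ν φ - dualityFunctional μ ν ψ|
      ≤ (1 + (1 - b)⁻¹) * ∫ x, |φ x - ψ x| ∂(μ + ν) := by
  have hφ' : IsAdmissible φ := ⟨hφ, a, b, hb, hφab⟩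
  have hψ' : IsAdmissible ψ := ⟨hψ, a, b, hb, hψab⟩
  have hlog (x : α) : |log (1 - φ x) - log (1 - ψ x)| ≤ (1 - b)⁻¹ * |φ x - ψ x| := by
    have := abs_log_sub_log_le (sub_pos.2 hb) (sub_le_sub_left (hφab x).2 1)
      (sub_le_sub_left (hψab x).2 1)
    rwa [sub_sub_sub_cancel_left, abs_sub_comm (ψ x)] at this
  have hd : Integrable (fun x => |φ x - ψ x|) (μ + ν) := (hφ'.integrable.sub hψ'.integrable).abs
  rw [integral_add_measure (integrable_add_measure.1 hd).1 (integrable_add_measure.1 hd).2]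
  have hν : |∫ x, (log (1 - φ x) - log (1 - ψ x)) ∂ν| ≤ ∫ x, (1 - b)⁻¹ * |φ x - ψ x| ∂ν :=
    abs_integral_le_integral_abs.trans <| integral_mono
      (hφ'.integrable_log_one_sub.sub hψ'.integrable_log_one_sub).abs
      ((integrable_add_measure.1 hd).2.const_mul _) hlog
  calc |dualityFunctional μ ν φ - dualityFunctional μ ν ψ|
      = |∫ x, (φ x - ψ x) ∂μ + ∫ x, (log (1 - φ x) - log (1 - ψ x)) ∂ν| := by
        rw [integral_sub hφ'.integrable hψ'.integrable,
          integral_sub hφ'.integrable_log_one_sub hψ'.integrable_log_one_sub,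
          dualityFunctional, dualityFunctional]
        ring_nf
    _ ≤ ∫ x, |φ x - ψ x| ∂μ + ∫ x, (1 - b)⁻¹ * |φ x - ψ x| ∂ν :=
      (abs_add_le _ _).trans (add_le_add abs_integral_le_integral_abs hν)
    _ ≤ _ := by
      rw [integral_const_mul]
      have hA : 0 ≤ ∫ x, |φ x - ψ x| ∂μ := integral_nonneg fun x => abs_nonneg _
      have hB : 0 ≤ ∫ x, |φ x - ψ x| ∂ν := integral_nonneg fun x => abs_nonneg _
      nlinarith [mul_nonneg (inv_nonneg.2 (sub_pos.2 hb).le) hA]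

section Topology

variable [TopologicalSpace α]

theorem dualityFunctional_le_klDiv [T2Space α] [OpensMeasurableSpace α] [IsFiniteMeasure μ]
    [IsFiniteMeasure ν] {K : Set α} (hK : IsCompact K) (hμK : μ Kᶜ = 0) {g : C(α, ℝ)}
    (hg : ∀ x ∈ K, g x < 1) :
    (dualityFunctional μ ν g : EReal) ≤ klDiv ν μ := by
  by_cases h : ν ≪ μ ∧ Integrable (llr ν μ) ν
  swap
  · simp [klDiv_eq_top_iff.2 fun hac hint => h ⟨hac, hint⟩]
  obtain ⟨hac, hint⟩ := h
  have hμ : ∀ᵐ x ∂μ, x ∈ K := ae_iff.2 hμK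
  have hlog : ContinuousOn (fun x => log (1 - g x)) K :=
    (continuous_const.sub g.continuous).continuousOn.log fun x hx => (sub_pos.2 (hg x hx)).ne'
  rw [← EReal.coe_ennreal_toReal (klDiv_ne_top hac hint), EReal.coe_le_coe_iff]
  refine dualityFunctional_le_toReal_klDiv hac hint (hμ.mono hg) ?_ ?_
  · rw [← Measure.restrict_eq_self_of_ae_mem hμ]
    exact g.continuous.continuousOn.integrableOn_compact hK
  · rw [← Measure.restrict_eq_self_of_ae_mem (hac.ae_le hμ)]
    exact hlog.integrableOn_compact hK

variable [NormalSpace α] [BorelSpace α]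

theorem IsAdmissible.exists_continuous_le_dualityFunctional [IsFiniteMeasure μ] [IsFiniteMeasure ν]
    [(μ + ν).WeaklyRegular] {φ : α → ℝ} (hφ : IsAdmissible φ) {ε : ℝ} (hε : 0 < ε) :
    ∃ g : C(α, ℝ), (∀ x, g x < 1) ∧ dualityFunctional μ ν φ - ε ≤ dualityFunctional μ ν g := by
  obtain ⟨hφm, a, b, hb, hφab⟩ := id hφ
  have hL : 0 < 1 + (1 - b)⁻¹ := by have := sub_pos.2 hb; positivity
  obtain ⟨g₀, hg₀, hg₀i⟩ := (hφ.integrable (μ := μ + ν)).exists_boundedContinuous_integral_sub_le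
    (div_pos hε hL)
  have hab : min a b ≤ b := min_le_right a b
  let g : C(α, ℝ) := ⟨fun x => projIcc (min a b) b hab (g₀ x), by fun_prop⟩
  have hg (x : α) : g x ∈ Icc (min a b) b := (projIcc (min a b) b hab (g₀ x)).2
  have hφ' (x : α) : φ x ∈ Icc (min a b) b := ⟨(min_le_left a b).trans (hφab x).1, (hφab x).2⟩
  have hdist (x : α) : |φ x - g x| ≤ ‖φ x - g₀ x‖ := by
    have := abs_projIcc_sub_projIcc hab (c := φ x) (d := g₀ x)
    rwa [projIcc_of_mem hab (hφ' x)] at this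
  refine ⟨g, fun x => (hg x).2.trans_lt hb, ?_⟩
  have hg' : IsAdmissible g := ⟨g.continuous.measurable, min a b, b, hb, hg⟩
  have hclose : ∫ x, |φ x - g x| ∂(μ + ν) ≤ ε / (1 + (1 - b)⁻¹) :=
    (integral_mono (hφ.integrable.sub hg'.integrable).abs (hφ.integrable.sub hg₀i).norm
      hdist).trans hg₀
  have := abs_dualityFunctional_sub_le (μ := μ) (ν := ν) hφm g.continuous.measurable hφ' hg hb
  rw [le_div_iff₀' hL] at hclose
  linarith [le_abs_self (dualityFunctional μ ν φ - dualityFunctional μ ν g)]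

theorem IsAdmissible.ofReal_dualityFunctional_le [IsFiniteMeasure μ] [IsFiniteMeasure ν]
    [(μ + ν).WeaklyRegular] {φ : α → ℝ} (hφ : IsAdmissible φ) (K : Set α) :
    ENNReal.ofReal (dualityFunctional μ ν φ) ≤
      (⨆ g : {g : C(α, ℝ) // ∀ x ∈ K, g x < 1}, (dualityFunctional μ ν g : EReal)).toENNReal := by
  refine ENNReal.le_of_forall_pos_le_add fun ε hε _ => ?_
  obtain ⟨g, hg1, hg⟩ := hφ.exists_continuous_le_dualityFunctional (μ := μ) (ν := ν)
    (NNReal.coe_pos.2 hε)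
  have hgS : (dualityFunctional μ ν g : EReal) ≤
      ⨆ g : {g : C(α, ℝ) // ∀ x ∈ K, g x < 1}, (dualityFunctional μ ν g : EReal) :=
    le_iSup_of_le (ι := {g : C(α, ℝ) // ∀ x ∈ K, g x < 1}) ⟨g, fun x _ => hg1 x⟩ le_rfl
  calc ENNReal.ofReal (dualityFunctional μ ν φ)
      ≤ ENNReal.ofReal (dualityFunctional μ ν g + ε) := ENNReal.ofReal_le_ofReal (by linarith)
    _ ≤ ENNReal.ofReal (dualityFunctional μ ν g) + ENNReal.ofReal ε := ENNReal.ofReal_add_le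
    _ ≤ _ := by
      gcongr
      · simpa using EReal.toENNReal_le_toENNReal hgS
      · simp

theorem iSup_dualityFunctional_eq_klDiv [T2Space α] [IsFiniteMeasure μ] [IsFiniteMeasure ν]
    [(μ + ν).WeaklyRegular] {K : Set α} (hK : IsCompact K) (hμK : μ Kᶜ = 0) :
    ⨆ g : {g : C(α, ℝ) // ∀ x ∈ K, g x < 1}, (dualityFunctional μ ν g : EReal) = klDiv ν μ := by
  set S := ⨆ g : {g : C(α, ℝ) // ∀ x ∈ K, g x < 1}, (dualityFunctional μ ν g : EReal)
  have hS : 0 ≤ S := le_iSup_of_le (ι := {g : C(α, ℝ) // ∀ x ∈ K, g x < 1})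
    ⟨0, fun _ _ => zero_lt_one⟩ (by simp [dualityFunctional])
  refine le_antisymm (iSup_le fun g => dualityFunctional_le_klDiv hK hμK g.2) ?_
  rw [← EReal.coe_toENNReal hS, EReal.coe_ennreal_le_coe_ennreal_iff]
  obtain ⟨φ, hφ, hlim⟩ := exists_isAdmissible_klDiv_le_liminf μ ν
  exact hlim.trans (liminf_le_of_frequently_le' (.of_forall fun n =>
    (hφ n).ofReal_dualityFunctional_le K))

end Topology

instance : IsProbabilityMeasure lambdaT := by
  constructor
  rw [lambdaT, Measure.map_apply (by fun_prop) MeasurableSet.univ]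
  simp only [preimage_univ, Measure.smul_apply, Measure.restrict_apply MeasurableSet.univ,
    univ_inter, Real.volume_Icc, sub_zero, smul_eq_mul]
  exact ENNReal.inv_mul_cancel (by simp [Real.pi_pos]) ENNReal.ofReal_ne_top

theorem kullback_eq_klDiv {P Q : Measure α} [IsFiniteMeasure P] [IsFiniteMeasure Q]
    (h : P univ = Q univ) : kullback P Q = klDiv P Q := by
  rw [kullback]
  split_ifs with hPQ
  · rw [← toReal_klDiv_of_measure_eq hPQ.1 h, EReal.coe_ennreal_toReal (klDiv_ne_top hPQ.1 hPQ.2)]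
  · simp [klDiv_eq_top_iff.2 fun hac hint => hPQ ⟨hac, hint⟩]

theorem duality_reversed_kullback
    (μ : Measure ℂ) [IsProbabilityMeasure μ]
    (hsupp : μ {z | ‖z‖ ≠ 1} = 0) :
    (⨆ g : {g : C(ℂ, ℝ) // ∀ z ∈ Metric.sphere (0 : ℂ) 1, g z < 1},
        ((∫ z, g.1 z ∂μ + ∫ z, Real.log (1 - g.1 z) ∂lambdaT : ℝ) : EReal))
      = kullback lambdaT μ := by
  have hμ : μ (Metric.sphere (0 : ℂ) 1)ᶜ = 0 := by
    convert hsupp using 2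
    ext; simp
  rw [kullback_eq_klDiv (by simp)]
  exact iSup_dualityFunctional_eq_klDiv (isCompact_sphere 0 1) hμ
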